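/- With p=2, for integers r₁,r₂ the hypergeometric sum G_{(r₁,r₂)}(q) := Σ_{n₁,n₂,n₃≥0, n₄∈ℤ} q^{n₁+n₂+n₃ + (|n₄-r₁|+|n₄-r₂|+|n₄|)/2} / ((q;q)_{n₁}(q;q)_{n₁+|n₄-r₁|}(q;q)_{n₂}(q;q)_{n₂+|n₄-r₂|}(q;q)_{n₃}(q;q)_{n₃+|n₄|}) equals the (r₁,r₂)-Fourier coefficient of 1/((ζ₁q^{1/2};q)_∞(ζ₁⁻¹q^{1/2};q)_∞(ζ₂q^{1/2};q)_∞(ζ₂⁻¹q^{1/2};q)_∞(ζ₁ζ₂q^{1/2};q)_∞(ζ₁⁻¹ζ₂⁻¹q^{1/2};q)_∞) in the region |q|<|ζⱼ|²<|q|⁻¹ (j=1,2), |q|<|ζ₁ζ₂|²<|q|⁻¹. -/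

import Mathlib

open Finset Filter Topology

noncomputable def qPoch (a q : ℂ) (n : ℕ) : ℂ := ∏ j ∈ Finset.range n, (1 - a * q ^ j)
noncomputable def qPochInf (a q : ℂ) : ℂ := ∏' j : ℕ, (1 - a * q ^ j)

lemma aux_exp_le {u : ℝ} (h0 : 0 ≤ u) (h1 : u < 1) : Real.exp (-(u / (1 - u))) ≤ 1 - u := by
  have h2 : (0:ℝ) < 1 - u := by linarith
  have h3 : u / (1 - u) + 1 ≤ Real.exp (u / (1 - u)) := Real.add_one_le_exp _
  have h4 : u / (1 - u) + 1 = (1 - u)⁻¹ := by field_simp; ring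
  rw [h4] at h3
  rw [Real.exp_neg]
  have h5 : (0:ℝ) < (1 - u)⁻¹ := by positivity
  calc (Real.exp (u / (1 - u)))⁻¹ ≤ ((1 - u)⁻¹)⁻¹ := by gcongr
    _ = 1 - u := inv_inv _

lemma qPoch_abs_lb (q : ℂ) (hq1 : ‖q‖ < 1) (n : ℕ) :
    Real.exp (-(‖q‖ / (1 - ‖q‖) ^ 2)) ≤ ‖qPoch q q n‖ := by
  set t := ‖q‖ with ht
  have ht0 : 0 ≤ t := norm_nonneg q
  have ht1 : t < 1 := hq1
  have h1t : (0:ℝ) < 1 - t := by linarith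
  have key : ∀ j : ℕ, Real.exp (-(t ^ (j+1) / (1 - t))) ≤ ‖1 - q * q ^ j‖ := by
    intro j
    have h2 : t ^ (j+1) ≤ t := by
      calc t ^ (j+1) ≤ t ^ 1 := pow_le_pow_of_le_one ht0 ht1.le (by omega)
        _ = t := pow_one t
    have h3 : t ^ (j+1) < 1 := lt_of_le_of_lt h2 ht1
    have h30 : (0:ℝ) ≤ t ^ (j+1) := by positivity
    have h4 : 1 - t ^ (j+1) ≤ ‖1 - q * q ^ j‖ := by
      have := norm_sub_norm_le (1 : ℂ) (q * q ^ j)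
      simpa [norm_mul, norm_pow, pow_succ'] using this
    refine le_trans ?_ (le_trans (aux_exp_le h30 h3) h4)
    apply Real.exp_le_exp.mpr
    rw [neg_le_neg_iff]
    apply div_le_div_of_nonneg_left h30 h1t (by linarith)
  have habs : ‖qPoch q q n‖ = ∏ j ∈ range n, ‖1 - q * q ^ j‖ := by
    unfold qPoch; exact norm_prod _ _
  rw [habs]
  have hsum : ∑ j ∈ range n, t ^ (j+1) / (1 - t) ≤ t / (1 - t) ^ 2 := by
    have hgeom : ∑ j ∈ range n, t ^ j ≤ (1 - t)⁻¹ := by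
      have := Summable.sum_le_tsum (range n) (fun i _ => by positivity)
        (summable_geometric_of_lt_one ht0 ht1)
      rwa [tsum_geometric_of_lt_one ht0 ht1] at this
    have : ∑ j ∈ range n, t ^ (j+1) ≤ t * (1 - t)⁻¹ := by
      have : ∑ j ∈ range n, t ^ (j+1) = t * ∑ j ∈ range n, t ^ j := by
        rw [mul_sum]; exact Finset.sum_congr rfl (fun j _ => by ring)
      rw [this]; exact mul_le_mul_of_nonneg_left hgeom ht0
    rw [← sum_div]
    rw [div_le_div_iff₀ h1t (by positivity)]
    calc (∑ j ∈ range n, t ^ (j+1)) * (1 - t) ^ 2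
        ≤ (t * (1 - t)⁻¹) * (1 - t) ^ 2 := by
          apply mul_le_mul_of_nonneg_right this (by positivity)
      _ = t * (1 - t) := by field_simp
  calc Real.exp (-(t / (1 - t) ^ 2)) ≤ Real.exp (-(∑ j ∈ range n, t ^ (j+1) / (1 - t))) := by
        apply Real.exp_le_exp.mpr; linarith
    _ = ∏ j ∈ range n, Real.exp (-(t ^ (j+1) / (1 - t))) := by
        rw [← Real.exp_sum]; congr 1; rw [← Finset.sum_neg_distrib]
    _ ≤ ∏ j ∈ range n, ‖1 - q * q ^ j‖ := by
        apply Finset.prod_le_prod (fun j _ => (Real.exp_pos _).le) (fun j _ => key j)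

lemma qPoch_ne_zero {q : ℂ} (hq1 : ‖q‖ < 1) (n : ℕ) : qPoch q q n ≠ 0 := by
  intro h
  have := qPoch_abs_lb q hq1 n
  rw [h, norm_zero] at this
  exact absurd this (by simpa using Real.exp_pos _)

lemma norm_f_le (q x : ℂ) (hq1 : ‖q‖ < 1) (n : ℕ) :
    ‖x ^ n / qPoch q q n‖ ≤ Real.exp (‖q‖ / (1 - ‖q‖) ^ 2) * ‖x‖ ^ n := by
  rw [norm_div, norm_pow]
  rw [div_eq_mul_inv, mul_comm]
  apply mul_le_mul_of_nonneg_right ?_ (by positivity)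
  have h := qPoch_abs_lb q hq1 n
  have hpos : (0:ℝ) < Real.exp (-(‖q‖ / (1 - ‖q‖) ^ 2)) := Real.exp_pos _
  have : (‖qPoch q q n‖)⁻¹ ≤ (Real.exp (-(‖q‖ / (1 - ‖q‖) ^ 2)))⁻¹ := by
    apply inv_anti₀ hpos h
  rwa [← Real.exp_neg, neg_neg] at this

lemma summable_norm_f (q x : ℂ) (hq1 : ‖q‖ < 1) (hx : ‖x‖ < 1) :
    Summable (fun n : ℕ => ‖x ^ n / qPoch q q n‖) := by
  apply Summable.of_nonneg_of_le (fun n => norm_nonneg _) (fun n => norm_f_le q x hq1 n)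
  exact (summable_geometric_of_lt_one (norm_nonneg x) hx).mul_left _

lemma qPoch_succ (q : ℂ) (n : ℕ) :
    qPoch q q (n + 1) = qPoch q q n * (1 - q ^ (n + 1)) := by
  unfold qPoch
  rw [Finset.prod_range_succ, ← pow_succ']

lemma euler_step (q x : ℂ) (hq1 : ‖q‖ < 1) (hx : ‖x‖ < 1) :
    ∑' n : ℕ, (q * x) ^ n / qPoch q q n = (1 - x) * ∑' n : ℕ, x ^ n / qPoch q q n := by
  have hS : Summable (fun n : ℕ => x ^ n / qPoch q q n) :=
    (summable_norm_f q x hq1 hx).of_norm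
  set S := ∑' n : ℕ, x ^ n / qPoch q q n with hSdef
  have hSsum : HasSum (fun n : ℕ => x ^ n / qPoch q q n) S := hS.hasSum
  set g : ℕ → ℂ := fun n => x ^ n / qPoch q q n - (q * x) ^ n / qPoch q q n with hg
  have hgsucc : ∀ n : ℕ, g (n + 1) = x * (x ^ n / qPoch q q n) := by
    intro n
    have hne : (1 : ℂ) - q ^ (n + 1) ≠ 0 := by
      intro h
      have : ‖q ^ (n+1)‖ < 1 := by
        rw [norm_pow]
        exact pow_lt_one₀ (norm_nonneg q) hq1 (by omega)
      rw [sub_eq_zero] at h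
      rw [← h] at this
      simp at this
    have hPn : qPoch q q n ≠ 0 := qPoch_ne_zero hq1 n
    rw [hg]
    simp only
    rw [qPoch_succ]
    field_simp
    ring
  have hg0 : g 0 = 0 := by simp [hg, qPoch]
  have hgsum : HasSum g (x * S) := by
    have h1 : HasSum (fun n => g (n + 1)) (x * S) := by
      have h2 : (fun n : ℕ => g (n + 1)) = fun n => x * (x ^ n / qPoch q q n) :=
        funext hgsucc
      rw [h2]
      exact hSsum.mul_left x
    have h3 := (hasSum_nat_add_iff (f := g) 1).mp h1
    simpa [hg0] using h3
  have hT : HasSum (fun n : ℕ => (q * x) ^ n / qPoch q q n) (S - x * S) := by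
    have h4 := hSsum.sub hgsum
    have h5 : (fun n : ℕ => x ^ n / qPoch q q n - g n)
        = fun n : ℕ => (q * x) ^ n / qPoch q q n := by
      funext n; simp [hg]
    rwa [h5] at h4
  rw [hT.tsum_eq]
  ring

lemma one_sub_ne_zero_of_abs_lt_one {z : ℂ} (hz : ‖z‖ < 1) : (1 : ℂ) - z ≠ 0 := by
  intro h
  rw [sub_eq_zero] at h
  rw [← h] at hz
  simp at hz

lemma multipliable_qPochInf (q x : ℂ) (hq1 : ‖q‖ < 1) (hx : ‖x‖ < 1) :
    Multipliable (fun j : ℕ => 1 - x * q ^ j) := by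
  set a := ‖x‖ with ha
  set t := ‖q‖ with htdef
  have ht0 : 0 ≤ t := norm_nonneg q
  have ha0 : 0 ≤ a := norm_nonneg x
  have habs : ∀ j : ℕ, ‖x * q ^ j‖ ≤ a := by
    intro j
    rw [norm_mul, norm_pow]
    calc a * t ^ j ≤ a * 1 := by
          apply mul_le_mul_of_nonneg_left (pow_le_one₀ ht0 hq1.le) ha0
      _ = a := mul_one a
  have hne : ∀ j : ℕ, (1 : ℂ) - x * q ^ j ≠ 0 := fun j =>
    one_sub_ne_zero_of_abs_lt_one (lt_of_le_of_lt (habs j) hx)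
  have hlog : Summable (fun n : ℕ => Complex.log (1 - x * q ^ n)) := by
    apply Summable.of_norm_bounded (g := fun n => ((1 - a)⁻¹ / 2 + 1) * (a * t ^ n))
      (((summable_geometric_of_lt_one ht0 hq1).mul_left a).mul_left _)
    intro n
    have hw : ‖-(x * q ^ n)‖ = a * t ^ n := by
      rw [norm_neg, norm_mul, norm_pow]
    set w := a * t ^ n with hwdef
    have hw0 : 0 ≤ w := by positivity
    have hwa : w ≤ a := by
      calc a * t ^ n ≤ a * 1 := mul_le_mul_of_nonneg_left (pow_le_one₀ ht0 hq1.le) ha0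
        _ = a := mul_one a
    have hw1 : w < 1 := lt_of_le_of_lt hwa hx
    have h1a : (0:ℝ) < 1 - a := by linarith
    have h1w : (0:ℝ) < 1 - w := by linarith
    have heq : (1 : ℂ) - x * q ^ n = 1 + -(x * q ^ n) := by ring
    rw [heq]
    have hb := Complex.norm_log_one_add_le (z := -(x * q ^ n)) (by rw [hw]; exact hw1)
    rw [hw] at hb
    refine le_trans hb ?_
    have hinv : (1 - w)⁻¹ ≤ (1 - a)⁻¹ := by gcongr <;> linarith
    have hsq : w ^ 2 * (1 - w)⁻¹ ≤ w * (1 - a)⁻¹ := by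
      apply mul_le_mul ?_ hinv (by positivity) hw0
      nlinarith
    calc w ^ 2 * (1 - w)⁻¹ / 2 + w ≤ w * (1 - a)⁻¹ / 2 + w := by linarith
      _ = ((1 - a)⁻¹ / 2 + 1) * w := by ring
  have := Complex.multipliable_of_summable_log hlog
  exact this

lemma euler (q x : ℂ) (hq1 : ‖q‖ < 1) (hx : ‖x‖ < 1) :
    qPochInf x q * ∑' n : ℕ, x ^ n / qPoch q q n = 1 := by
  set S := ∑' n : ℕ, x ^ n / qPoch q q n with hSdef
  set a := ‖x‖ with ha
  set t := ‖q‖ with htdef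
  have ht0 : 0 ≤ t := norm_nonneg q
  have ha0 : 0 ≤ a := norm_nonneg x
  have hqN : ∀ N : ℕ, ‖q ^ N * x‖ < 1 := by
    intro N
    rw [norm_mul, norm_pow]
    calc t ^ N * a ≤ 1 * a := mul_le_mul_of_nonneg_right (pow_le_one₀ ht0 hq1.le) ha0
      _ = a := one_mul a
      _ < 1 := hx
  have iter : ∀ N : ℕ, ∑' n : ℕ, (q ^ N * x) ^ n / qPoch q q n = qPoch x q N * S := by
    intro N
    induction N with
    | zero =>
      rw [pow_zero, one_mul]
      have h0 : qPoch x q 0 = 1 := by simp [qPoch]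
      rw [h0, one_mul]
    | succ N ih =>
      have h1 : (fun n : ℕ => (q ^ (N+1) * x) ^ n / qPoch q q n)
          = fun n : ℕ => (q * (q ^ N * x)) ^ n / qPoch q q n := by
        funext n; ring_nf
      rw [h1, euler_step q (q ^ N * x) hq1 (hqN N), ih]
      have h2 : qPoch x q (N + 1) = qPoch x q N * (1 - x * q ^ N) := by
        unfold qPoch; rw [Finset.prod_range_succ]
      rw [h2]
      ring
  have hmult := multipliable_qPochInf q x hq1 hx
  have hA : Tendsto (fun N => qPoch x q N * S) atTop (𝓝 (qPochInf x q * S)) := by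
    have h := hmult.hasProd.tendsto_prod_nat
    exact (h.mul_const S : _)
  have hB : Tendsto (fun N => ∑' n : ℕ, (q ^ N * x) ^ n / qPoch q q n) atTop (𝓝 1) := by
    have hgoal := tendsto_tsum_of_dominated_convergence
      (f := fun (N : ℕ) (n : ℕ) => (q ^ N * x) ^ n / qPoch q q n)
      (g := fun n : ℕ => if n = 0 then (1 : ℂ) else 0)
      (bound := fun n : ℕ => Real.exp (t / (1 - t) ^ 2) * a ^ n)
      (𝓕 := atTop)
      ((summable_geometric_of_lt_one ha0 hx).mul_left _)
      ?_ ?_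
    · rw [tsum_ite_eq 0 (fun _ => (1 : ℂ))] at hgoal
      exact hgoal
    · intro k
      match k with
      | 0 => simpa [qPoch] using tendsto_const_nhds
      | (m + 1) =>
        simp only [if_neg (Nat.succ_ne_zero m)]
        have h0 : Tendsto (fun N : ℕ => q ^ N) atTop (𝓝 0) := by
          apply tendsto_pow_atTop_nhds_zero_of_norm_lt_one
          exact hq1
        have h1 : Tendsto (fun N : ℕ => (q ^ N * x) ^ (m + 1) / qPoch q q (m + 1)) atTop
            (𝓝 (((0 : ℂ) * x) ^ (m + 1) / qPoch q q (m + 1))) := by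
          exact ((h0.mul_const x).pow (m + 1)).div_const _
        simpa using h1
    · filter_upwards with N n
      calc ‖(q ^ N * x) ^ n / qPoch q q n‖
          ≤ Real.exp (t / (1 - t) ^ 2) * ‖q ^ N * x‖ ^ n :=
            norm_f_le q (q ^ N * x) hq1 n
        _ ≤ Real.exp (t / (1 - t) ^ 2) * a ^ n := by
            apply mul_le_mul_of_nonneg_left ?_ (Real.exp_pos _).le
            apply pow_le_pow_left₀ (norm_nonneg _)
            rw [norm_mul, norm_pow]
            calc t ^ N * a ≤ 1 * a := mul_le_mul_of_nonneg_right (pow_le_one₀ ht0 hq1.le) ha0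
              _ = a := one_mul a
  have heq : (fun N : ℕ => ∑' n : ℕ, (q ^ N * x) ^ n / qPoch q q n)
      = fun N : ℕ => qPoch x q N * S := funext iter
  rw [heq] at hB
  exact tendsto_nhds_unique hA hB
def stmtEquiv : ((ℕ × ℕ) × (ℕ × ℕ) × (ℕ × ℕ)) ≃ ((ℤ × ℤ) × ((ℕ × ℕ × ℕ) × ℤ)) where
  toFun t :=
    ((((t.1.1 : ℤ) - t.1.2) + ((t.2.2.1 : ℤ) - t.2.2.2),
      ((t.2.1.1 : ℤ) - t.2.1.2) + ((t.2.2.1 : ℤ) - t.2.2.2)),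
     ((min t.1.1 t.1.2, min t.2.1.1 t.2.1.2, min t.2.2.1 t.2.2.2),
      (t.2.2.1 : ℤ) - t.2.2.2))
  invFun u :=
    ((u.2.1.1 + (u.1.1 - u.2.2).toNat, u.2.1.1 + (u.2.2 - u.1.1).toNat),
     (u.2.1.2.1 + (u.1.2 - u.2.2).toNat, u.2.1.2.1 + (u.2.2 - u.1.2).toNat),
     (u.2.1.2.2 + u.2.2.toNat, u.2.1.2.2 + (-u.2.2).toNat))
  left_inv t := by
    obtain ⟨⟨k1, l1⟩, ⟨k2, l2⟩, ⟨k3, l3⟩⟩ := t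
    simp only [Prod.mk.injEq]
    refine ⟨⟨?_, ?_⟩, ⟨?_, ?_⟩, ⟨?_, ?_⟩⟩ <;> omega
  right_inv u := by
    obtain ⟨⟨r1, r2⟩, ⟨⟨n1, n2, n3⟩, n4⟩⟩ := u
    simp only [Prod.mk.injEq]
    refine ⟨⟨?_, ?_⟩, ⟨?_, ?_, ?_⟩, ?_⟩ <;> omega

lemma pair_eq (q s ζ : ℂ) (hs : s ^ 2 = q) (hζ : ζ ≠ 0) (m : ℤ) (n : ℕ) :
    (ζ * s) ^ (n + m.toNat) / qPoch q q (n + m.toNat) *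
      ((ζ⁻¹ * s) ^ (n + (-m).toNat) / qPoch q q (n + (-m).toNat))
    = ζ ^ m * (q ^ n * s ^ m.natAbs /
        (qPoch q q n * qPoch q q (n + m.natAbs))) := by
  rw [div_mul_div_comm]
  have hnum : (ζ * s) ^ (n + m.toNat) * (ζ⁻¹ * s) ^ (n + (-m).toNat)
      = ζ ^ m * (q ^ n * s ^ m.natAbs) := by
    rw [mul_pow, mul_pow, inv_pow]
    rw [← zpow_natCast ζ (n + m.toNat), ← zpow_natCast ζ (n + (-m).toNat), ← zpow_neg]
    rw [mul_mul_mul_comm, ← zpow_add₀ hζ, ← pow_add]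
    have hm : ((n + m.toNat : ℕ) : ℤ) + -((n + (-m).toNat : ℕ) : ℤ) = m := by
      push_cast; omega
    rw [hm]
    have hsum : n + m.toNat + (n + (-m).toNat) = 2 * n + m.natAbs := by omega
    rw [hsum]
    congr 1
    rw [pow_add, pow_mul, hs]
  rw [hnum]
  have hden : qPoch q q (n + m.toNat) * qPoch q q (n + (-m).toNat)
      = qPoch q q n * qPoch q q (n + m.natAbs) := by
    rcases le_total 0 m with h | h
    · have h1 : n + m.toNat = n + m.natAbs := by omega
      have h2 : n + (-m).toNat = n := by omega
      rw [h1, h2, mul_comm]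
    · have h1 : n + m.toNat = n := by omega
      have h2 : n + (-m).toNat = n + m.natAbs := by omega
      rw [h1, h2]
  rw [hden, mul_div_assoc]

lemma main_term (q s ζ₁ ζ₂ : ℂ) (hs : s ^ 2 = q) (h1 : ζ₁ ≠ 0) (h2 : ζ₂ ≠ 0)
    (r₁ r₂ n₄ : ℤ) (n₁ n₂ n₃ : ℕ) :
    ((ζ₁ * s) ^ (n₁ + (r₁ - n₄).toNat) / qPoch q q (n₁ + (r₁ - n₄).toNat) *
      ((ζ₁⁻¹ * s) ^ (n₁ + (n₄ - r₁).toNat) / qPoch q q (n₁ + (n₄ - r₁).toNat))) *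
    ((ζ₂ * s) ^ (n₂ + (r₂ - n₄).toNat) / qPoch q q (n₂ + (r₂ - n₄).toNat) *
      ((ζ₂⁻¹ * s) ^ (n₂ + (n₄ - r₂).toNat) / qPoch q q (n₂ + (n₄ - r₂).toNat)) *
     ((ζ₁ * ζ₂ * s) ^ (n₃ + n₄.toNat) / qPoch q q (n₃ + n₄.toNat) *
      ((ζ₁⁻¹ * ζ₂⁻¹ * s) ^ (n₃ + (-n₄).toNat) / qPoch q q (n₃ + (-n₄).toNat))))
    = q ^ (n₁ + n₂ + n₃) * s ^ ((n₄ - r₁).natAbs + (n₄ - r₂).natAbs + n₄.natAbs) /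
      (qPoch q q n₁ * qPoch q q (n₁ + (n₄ - r₁).natAbs) *
       qPoch q q n₂ * qPoch q q (n₂ + (n₄ - r₂).natAbs) *
       qPoch q q n₃ * qPoch q q (n₃ + n₄.natAbs)) * ζ₁ ^ r₁ * ζ₂ ^ r₂ := by
  rw [show n₄ - r₁ = -(r₁ - n₄) from by ring, show n₄ - r₂ = -(r₂ - n₄) from by ring]
  simp only [Int.natAbs_neg]
  rw [show ζ₁⁻¹ * ζ₂⁻¹ = (ζ₁ * ζ₂)⁻¹ from (mul_inv ζ₁ ζ₂).symm]
  rw [pair_eq q s ζ₁ hs h1 (r₁ - n₄) n₁, pair_eq q s ζ₂ hs h2 (r₂ - n₄) n₂,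
    pair_eq q s (ζ₁ * ζ₂) hs (mul_ne_zero h1 h2) n₄ n₃]
  rw [mul_zpow]
  have hz1 : ζ₁ ^ r₁ = ζ₁ ^ (r₁ - n₄) * ζ₁ ^ n₄ := by
    rw [← zpow_add₀ h1]; congr 1; ring
  have hz2 : ζ₂ ^ r₂ = ζ₂ ^ (r₂ - n₄) * ζ₂ ^ n₄ := by
    rw [← zpow_add₀ h2]; congr 1; ring
  rw [hz1, hz2]
  generalize ζ₁ ^ (r₁ - n₄) = A
  generalize ζ₁ ^ n₄ = B
  generalize ζ₂ ^ (r₂ - n₄) = C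
  generalize ζ₂ ^ n₄ = D
  ring

/-- The q-hypergeometric series G_{(r₁,r₂)}(q) for p=2 (with s a fixed square root of q):
G_{(r₁,r₂)}(q) = Σ_{n₁,n₂,n₃≥0,n₄∈ℤ} q^{n₁+n₂+n₃+(|n₄-r₁|+|n₄-r₂|+|n₄|)/2} /
  ((q;q)_{n₁}(q;q)_{n₁+|n₄-r₁|}(q;q)_{n₂}(q;q)_{n₂+|n₄-r₂|}(q;q)_{n₃}(q;q)_{n₃+|n₄|}). -/
noncomputable def Ghyp (q s : ℂ) (r₁ r₂ : ℤ) : ℂ :=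
  ∑' n : (ℕ × ℕ × ℕ) × ℤ,
    q ^ (n.1.1 + n.1.2.1 + n.1.2.2) *
      s ^ ((n.2 - r₁).natAbs + (n.2 - r₂).natAbs + n.2.natAbs) /
      (qPoch q q n.1.1 * qPoch q q (n.1.1 + (n.2 - r₁).natAbs) *
       qPoch q q n.1.2.1 * qPoch q q (n.1.2.1 + (n.2 - r₂).natAbs) *
       qPoch q q n.1.2.2 * qPoch q q (n.1.2.2 + n.2.natAbs))

/-- for p=2, the G_{(r₁,r₂)}(q) are the Fourier coefficients of
1/((ζ₁q^{1/2};q)_∞(ζ₁⁻¹q^{1/2};q)_∞(ζ₂q^{1/2};q)_∞(ζ₂⁻¹q^{1/2};q)_∞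
   (ζ₁ζ₂q^{1/2};q)_∞(ζ₁⁻¹ζ₂⁻¹q^{1/2};q)_∞)
in the region |q|<|ζⱼ|²<|q|⁻¹ (j=1,2), |q|<|ζ₁ζ₂|²<|q|⁻¹: that is, the Laurent
expansion there has coefficients G_{(r₁,r₂)}(q). -/
theorem stmt17 (q s : ℂ) (hs : s ^ 2 = q) (hq0 : 0 < ‖q‖)
    (hq1 : ‖q‖ < 1) (ζ₁ ζ₂ : ℂ)
    (h₁l : ‖q‖ < ‖ζ₁‖ ^ 2) (h₁r : ‖ζ₁‖ ^ 2 < (‖q‖)⁻¹)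
    (h₂l : ‖q‖ < ‖ζ₂‖ ^ 2) (h₂r : ‖ζ₂‖ ^ 2 < (‖q‖)⁻¹)
    (h₃l : ‖q‖ < ‖ζ₁ * ζ₂‖ ^ 2)
    (h₃r : ‖ζ₁ * ζ₂‖ ^ 2 < (‖q‖)⁻¹) :
    1 / (qPochInf (ζ₁ * s) q * qPochInf (ζ₁⁻¹ * s) q * qPochInf (ζ₂ * s) q *
          qPochInf (ζ₂⁻¹ * s) q * qPochInf (ζ₁ * ζ₂ * s) q * qPochInf (ζ₁⁻¹ * ζ₂⁻¹ * s) q)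
      = ∑' r : ℤ × ℤ, Ghyp q s r.1 r.2 * ζ₁ ^ r.1 * ζ₂ ^ r.2 := by
  have habs_s : ‖s‖ ^ 2 = ‖q‖ := by rw [← norm_pow, hs]
  have hζ₁ : ζ₁ ≠ 0 := by
    intro h; rw [h] at h₁l; simp at h₁l; linarith
  have hζ₂ : ζ₂ ≠ 0 := by
    intro h; rw [h] at h₂l; simp at h₂l; linarith
  have bound_r : ∀ z : ℂ, ‖z‖ ^ 2 < (‖q‖)⁻¹ → ‖z * s‖ < 1 := by
    intro z hz
    have h2 : ‖z * s‖ ^ 2 < 1 := by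
      rw [norm_mul, mul_pow, habs_s]
      calc ‖z‖ ^ 2 * ‖q‖ < (‖q‖)⁻¹ * ‖q‖ :=
            mul_lt_mul_of_pos_right hz hq0
        _ = 1 := inv_mul_cancel₀ (ne_of_gt hq0)
    nlinarith [norm_nonneg (z * s)]
  have bound_l : ∀ z : ℂ, z ≠ 0 → ‖q‖ < ‖z‖ ^ 2 →
      ‖z⁻¹ * s‖ < 1 := by
    intro z hz0 hz
    have hc : 0 < ‖z‖ := norm_pos_iff.mpr hz0
    have h2 : ‖z⁻¹ * s‖ ^ 2 < 1 := by
      rw [norm_mul, mul_pow, habs_s, norm_inv, inv_pow, ← div_eq_inv_mul,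
        div_lt_one (by positivity)]
      exact hz
    nlinarith [norm_nonneg (z⁻¹ * s)]
  have hx1 : ‖ζ₁ * s‖ < 1 := bound_r ζ₁ h₁r
  have hx2 : ‖ζ₁⁻¹ * s‖ < 1 := bound_l ζ₁ hζ₁ h₁l
  have hx3 : ‖ζ₂ * s‖ < 1 := bound_r ζ₂ h₂r
  have hx4 : ‖ζ₂⁻¹ * s‖ < 1 := bound_l ζ₂ hζ₂ h₂l
  have hx5 : ‖ζ₁ * ζ₂ * s‖ < 1 := bound_r (ζ₁ * ζ₂) h₃r
  have hx6 : ‖ζ₁⁻¹ * ζ₂⁻¹ * s‖ < 1 := by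
    rw [show ζ₁⁻¹ * ζ₂⁻¹ = (ζ₁ * ζ₂)⁻¹ from (mul_inv ζ₁ ζ₂).symm]
    exact bound_l (ζ₁ * ζ₂) (mul_ne_zero hζ₁ hζ₂) h₃l
  have E : ∀ x : ℂ, ‖x‖ < 1 →
      (∑' n : ℕ, x ^ n / qPoch q q n) = 1 / qPochInf x q := fun x hx =>
    eq_one_div_of_mul_eq_one_left (by rw [mul_comm]; exact euler q x hq1 hx)
  have n1 := summable_norm_f q (ζ₁ * s) hq1 hx1
  have n2 := summable_norm_f q (ζ₁⁻¹ * s) hq1 hx2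
  have n3 := summable_norm_f q (ζ₂ * s) hq1 hx3
  have n4 := summable_norm_f q (ζ₂⁻¹ * s) hq1 hx4
  have n5 := summable_norm_f q (ζ₁ * ζ₂ * s) hq1 hx5
  have n6 := summable_norm_f q (ζ₁⁻¹ * ζ₂⁻¹ * s) hq1 hx6
  have n12 := n1.mul_norm n2
  have n34 := n3.mul_norm n4
  have n56 := n5.mul_norm n6
  have n3456 := n34.mul_norm n56
  have nall := n12.mul_norm n3456
  set Big : ((ℕ × ℕ) × (ℕ × ℕ) × (ℕ × ℕ)) → ℂ := fun z =>
    ((ζ₁ * s) ^ z.1.1 / qPoch q q z.1.1 * ((ζ₁⁻¹ * s) ^ z.1.2 / qPoch q q z.1.2)) *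
    ((ζ₂ * s) ^ z.2.1.1 / qPoch q q z.2.1.1 * ((ζ₂⁻¹ * s) ^ z.2.1.2 / qPoch q q z.2.1.2) *
     ((ζ₁ * ζ₂ * s) ^ z.2.2.1 / qPoch q q z.2.2.1 *
      ((ζ₁⁻¹ * ζ₂⁻¹ * s) ^ z.2.2.2 / qPoch q q z.2.2.2))) with hBig
  set Gt : ((ℤ × ℤ) × ((ℕ × ℕ × ℕ) × ℤ)) → ℂ := fun u =>
    q ^ (u.2.1.1 + u.2.1.2.1 + u.2.1.2.2) *
      s ^ ((u.2.2 - u.1.1).natAbs + (u.2.2 - u.1.2).natAbs + u.2.2.natAbs) /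
      (qPoch q q u.2.1.1 * qPoch q q (u.2.1.1 + (u.2.2 - u.1.1).natAbs) *
       qPoch q q u.2.1.2.1 * qPoch q q (u.2.1.2.1 + (u.2.2 - u.1.2).natAbs) *
       qPoch q q u.2.1.2.2 * qPoch q q (u.2.1.2.2 + u.2.2.natAbs)) *
      ζ₁ ^ u.1.1 * ζ₂ ^ u.1.2 with hGt
  have hpoint : ∀ u : (ℤ × ℤ) × ((ℕ × ℕ × ℕ) × ℤ), Big (stmtEquiv.symm u) = Gt u := by
    intro u
    obtain ⟨⟨r1, r2⟩, ⟨⟨m1, m2, m3⟩, m4⟩⟩ := u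
    simp only [hBig, hGt, stmtEquiv, Equiv.coe_fn_symm_mk]
    exact main_term q s ζ₁ ζ₂ hs hζ₁ hζ₂ r1 r2 m4 m1 m2 m3
  have sBig : Summable Big := nall.of_norm
  have sGt : Summable Gt := by
    have h := (stmtEquiv.symm.summable_iff (f := Big)).mpr sBig
    exact h.congr hpoint
  calc 1 / (qPochInf (ζ₁ * s) q * qPochInf (ζ₁⁻¹ * s) q * qPochInf (ζ₂ * s) q *
          qPochInf (ζ₂⁻¹ * s) q * qPochInf (ζ₁ * ζ₂ * s) q * qPochInf (ζ₁⁻¹ * ζ₂⁻¹ * s) q)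
      = ((∑' n : ℕ, (ζ₁ * s) ^ n / qPoch q q n) * (∑' n : ℕ, (ζ₁⁻¹ * s) ^ n / qPoch q q n)) *
        (((∑' n : ℕ, (ζ₂ * s) ^ n / qPoch q q n) * (∑' n : ℕ, (ζ₂⁻¹ * s) ^ n / qPoch q q n)) *
         ((∑' n : ℕ, (ζ₁ * ζ₂ * s) ^ n / qPoch q q n) *
          (∑' n : ℕ, (ζ₁⁻¹ * ζ₂⁻¹ * s) ^ n / qPoch q q n))) := by
        rw [E _ hx1, E _ hx2, E _ hx3, E _ hx4, E _ hx5, E _ hx6]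
        simp only [div_mul_div_comm, one_mul]
        congr 1
        ring
    _ = (∑' z : ℕ × ℕ, (ζ₁ * s) ^ z.1 / qPoch q q z.1 * ((ζ₁⁻¹ * s) ^ z.2 / qPoch q q z.2)) *
        ((∑' z : ℕ × ℕ, (ζ₂ * s) ^ z.1 / qPoch q q z.1 * ((ζ₂⁻¹ * s) ^ z.2 / qPoch q q z.2)) *
         (∑' z : ℕ × ℕ, (ζ₁ * ζ₂ * s) ^ z.1 / qPoch q q z.1 *
           ((ζ₁⁻¹ * ζ₂⁻¹ * s) ^ z.2 / qPoch q q z.2))) := by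
        rw [tsum_mul_tsum_of_summable_norm n1 n2, tsum_mul_tsum_of_summable_norm n3 n4,
          tsum_mul_tsum_of_summable_norm n5 n6]
    _ = (∑' z : ℕ × ℕ, (ζ₁ * s) ^ z.1 / qPoch q q z.1 * ((ζ₁⁻¹ * s) ^ z.2 / qPoch q q z.2)) *
        (∑' z : (ℕ × ℕ) × (ℕ × ℕ),
          (ζ₂ * s) ^ z.1.1 / qPoch q q z.1.1 * ((ζ₂⁻¹ * s) ^ z.1.2 / qPoch q q z.1.2) *
          ((ζ₁ * ζ₂ * s) ^ z.2.1 / qPoch q q z.2.1 *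
           ((ζ₁⁻¹ * ζ₂⁻¹ * s) ^ z.2.2 / qPoch q q z.2.2))) := by
        rw [tsum_mul_tsum_of_summable_norm n34 n56]
    _ = ∑' z : (ℕ × ℕ) × (ℕ × ℕ) × (ℕ × ℕ), Big z :=
        tsum_mul_tsum_of_summable_norm n12 n3456
    _ = ∑' u : (ℤ × ℤ) × ((ℕ × ℕ × ℕ) × ℤ), Big (stmtEquiv.symm u) :=
        (stmtEquiv.symm.tsum_eq Big).symm
    _ = ∑' u : (ℤ × ℤ) × ((ℕ × ℕ × ℕ) × ℤ), Gt u := tsum_congr hpoint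
    _ = ∑' r : ℤ × ℤ, ∑' n : (ℕ × ℕ × ℕ) × ℤ, Gt (r, n) := sGt.tsum_prod
    _ = ∑' r : ℤ × ℤ, Ghyp q s r.1 r.2 * ζ₁ ^ r.1 * ζ₂ ^ r.2 := by
        apply tsum_congr
        intro r
        rw [hGt]
        simp only
        rw [tsum_mul_right, tsum_mul_right]
        rfl
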